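/- arXiv:2107.08615 — 2 statements merged into one kernel-verified Lean document; each statement's English description precedes it below -/
import Mathlib

section
/- Let T be a string of length n and T' obtained from T by inserting a single character at an arbitrary position (so |T'| = n+1). Then δ(T') ≤ δ(T) + 1. -/
/-!
A length-`k` window of the new string that avoids the inserted position is already a window
of `T`, and at most `k` windows cover that position, so `Substr(T', k) ≤ Substr(T, k) + k`.
Dividing by `k` bounds every ratio with `k ≤ |T|` by `δ(T) + 1`; the only remaining length,
`k = |T| + 1`, has a single window and ratio at most `1`.
-/

/-- `substrCount T k` is the number of distinct length-`k` (contiguous) substrings of `T`. -/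
def substrCount {α : Type*} [DecidableEq α] (T : List α) (k : ℕ) : ℕ :=
  ((Finset.range (T.length - k + 1)).image fun j => (T.drop j).take k).card

/-- Substring complexity `δ(T) = max_{1 ≤ k ≤ |T|} Substr(T,k)/k`. -/
def delta {α : Type*} [DecidableEq α] (T : List α) : NNRat :=
  (Finset.Icc 1 T.length).sup fun k => (substrCount T k : NNRat) / (k : NNRat)

section Insertion

variable {α : Type*} (T : List α) (c : α) {j : ℕ}

theorem length_take_append_cons_drop (hj : j ≤ T.length) :
    (T.take j ++ c :: T.drop j).length = T.length + 1 := by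
  simp only [List.length_append, List.length_take, List.length_cons, List.length_drop]
  omega

theorem take_drop_take_append_cons_drop {i k : ℕ} (hj : j ≤ T.length) (h : i + k ≤ j) :
    ((T.take j ++ c :: T.drop j).drop i).take k = (T.drop i).take k := by
  rw [List.take_drop, List.take_drop,
    List.take_append_of_le_length (by rw [List.length_take]; omega), List.take_take,
    Nat.min_eq_left h]

theorem drop_take_append_cons_drop_of_lt {i : ℕ} (hj : j ≤ T.length) (h : j < i) :
    (T.take j ++ c :: T.drop j).drop i = T.drop (i - 1) := by
  obtain ⟨m, rfl⟩ : ∃ m, i = j + m + 1 := ⟨i - j - 1, by omega⟩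
  rw [List.drop_append, List.drop_eq_nil_of_le (by rw [List.length_take]; omega),
    List.length_take, Nat.min_eq_left hj, List.nil_append,
    show j + m + 1 - j = m + 1 by omega, List.drop_succ_cons, List.drop_drop]
  rfl

end Insertion

section SubstrCount

variable {α : Type*} [DecidableEq α]

theorem substrCount_le_one_of_length_le {T : List α} {k : ℕ} (hk : T.length ≤ k) :
    substrCount T k ≤ 1 := by
  rw [substrCount, Nat.sub_eq_zero_of_le hk]
  exact Finset.card_image_le.trans (by simp)

theorem substrCount_take_append_cons_drop_le (T : List α) (c : α) {j : ℕ} (k : ℕ)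
    (hj : j ≤ T.length) :
    substrCount (T.take j ++ c :: T.drop j) k ≤ substrCount T k + k := by
  set T' := T.take j ++ c :: T.drop j
  have hlen : T'.length = T.length + 1 := length_take_append_cons_drop T c hj
  have hcover : ((Finset.range (T'.length - k + 1)).image fun i => (T'.drop i).take k)
      ⊆ ((Finset.range (T.length - k + 1)).image fun i => (T.drop i).take k)
        ∪ ((Finset.Icc (j + 1 - k) j).image fun i => (T'.drop i).take k) := by
    simp only [Finset.subset_iff, Finset.mem_union, Finset.mem_image, Finset.mem_range,
      Finset.mem_Icc, hlen]
    rintro _ ⟨i, hi, rfl⟩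
    by_cases hcross : j + 1 - k ≤ i ∧ i ≤ j
    · exact Or.inr ⟨i, hcross, rfl⟩
    rcases (by omega : i + k ≤ j ∨ j < i) with hleft | hright
    · exact Or.inl ⟨i, by omega, (take_drop_take_append_cons_drop T c hj hleft).symm⟩
    · exact Or.inl ⟨i - 1, by omega, by rw [drop_take_append_cons_drop_of_lt T c hj hright]⟩
  calc substrCount T' k ≤ _ := Finset.card_le_card hcover
    _ ≤ _ + _ := Finset.card_union_le _ _
    _ ≤ substrCount T k + k :=
      Nat.add_le_add_left (Finset.card_image_le.trans (by rw [Nat.card_Icc]; omega)) _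

theorem substrCount_div_le_delta {T : List α} {k : ℕ} (hk : k ∈ Finset.Icc 1 T.length) :
    (substrCount T k : NNRat) / k ≤ delta T :=
  Finset.le_sup (f := fun k => (substrCount T k : NNRat) / k) hk

end SubstrCount

/-- If `T'` is obtained from `T` by inserting a single character `c` at an arbitrary
position `j` (so `|T'| = |T| + 1`), then `δ(T') ≤ δ(T) + 1`. -/
theorem delta_insertion_le {α : Type*} [DecidableEq α]
    (T T' : List α) (j : ℕ) (c : α) (hj : j ≤ T.length)
    (hT' : T' = T.take j ++ c :: T.drop j) :
    delta T' ≤ delta T + 1 := by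
  have hlen : T'.length = T.length + 1 := hT' ▸ length_take_append_cons_drop T c hj
  have hcount (k : ℕ) : substrCount T' k ≤ substrCount T k + k :=
    hT' ▸ substrCount_take_append_cons_drop_le T c k hj
  refine Finset.sup_le fun k hk => ?_
  rw [Finset.mem_Icc, hlen] at hk
  have hk0 : (k : NNRat) ≠ 0 := by exact_mod_cast (by omega : k ≠ 0)
  by_cases hkT : k ≤ T.length
  · calc (substrCount T' k : NNRat) / k ≤ ((substrCount T k + k : ℕ) : NNRat) / k := by
          gcongr; exact hcount k
      _ = (substrCount T k : NNRat) / k + 1 := by push_cast; rw [add_div, div_self hk0]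
      _ ≤ delta T + 1 := by gcongr; exact substrCount_div_le_delta (Finset.mem_Icc.2 ⟨hk.1, hkT⟩)
  · calc (substrCount T' k : NNRat) / k ≤ 1 / 1 := by
          gcongr
          · exact_mod_cast substrCount_le_one_of_length_le (by omega)
          · exact_mod_cast hk.1
      _ ≤ delta T + 1 := by rw [div_one]; exact le_add_self
end

section
/- Let γ(T) denote the smallest string attractor size. There exists a string T of length n (for infinitely many n) and a string T' with edit distance 1 from T such that γ(T')/γ(T) ≥ 2 - o(1); concretely, for T = a^k x a^{k+1} #_1 a^{k-1} x a #_2 a^{k-2} x a^2 #_3 ⋯ #_k x a^k over an alphabet with k+2 distinct characters {a, x, #_1,…,#_k}, we have γ(T) = k+2, while substituting the first occurrence of x by a new character b yields T' with γ(T') = 2k+2. -/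
/-!
Each `#_j` occurs once in `T`, so every attractor contains its position; the factors `a^k x`
and `a^{k+1}` also occur only once, in the prefix `a^k x a^{k+1}`, which forces two more
positions there: `γ(T) ≥ k + 2`. Conversely, the first `x`, the last letter of the prefix and the
`#`'s form an attractor: a factor avoiding them lies inside a block between two `#`'s, so it is
`a^s x a^t` or `a^s` with `s, t` small, and it also occurs across the first `x` or the end of the
prefix. Once the first `x` is replaced by a fresh `b`, the prefix no longer contains `x`, so the
block content `a^{k-1-q} x a^{q+1}` becomes a unique factor and forces one more position in every
block, while the positions of `b`, of the `#`'s, of the remaining `x`'s and the end of the prefix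
form an attractor of size `2k + 2`.
-/

/-- `Γ` is a string attractor for `T` (positions 0-indexed). -/
def IsAttractor {α : Type*} (T : List α) (Γ : Finset ℕ) : Prop :=
  ∀ j k : ℕ, 0 < k → j + k ≤ T.length →
    ∃ j', j' + k ≤ T.length ∧ (T.drop j').take k = (T.drop j).take k ∧
      ∃ p ∈ Γ, j' ≤ p ∧ p < j' + k

/-- `gamma T` is the smallest size of a string attractor for `T`. -/
noncomputable def gamma {α : Type*} (T : List α) : ℕ :=
  sInf {m | ∃ Γ : Finset ℕ, IsAttractor T Γ ∧ Γ.card = m}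

/-- The string `T = a^k x a^{k+1} #_1 a^{k-1} x a #_2 a^{k-2} x a^2 #_3 ⋯ #_k x a^k`
over the alphabet `{a, x, #_1, …, #_k}`, encoded over `ℕ` with `a = 0`, `x = 1`,
`#_j = 2 + j` (so `b = 2` is a fresh character). -/
def attrT (k : ℕ) : List ℕ :=
  List.replicate k 0 ++ [1] ++ List.replicate (k + 1) 0 ++
    ((List.range k).flatMap fun j =>
      [3 + j] ++ List.replicate (k - 1 - j) 0 ++ [1] ++ List.replicate (j + 1) 0)


open Finset

section Attractor

variable {α : Type*}

theorem isAttractor_range_length (T : List α) : IsAttractor T (range T.length) :=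
  fun j _ hk hj => ⟨j, hj, rfl, j, mem_range.2 (by omega), le_rfl, by omega⟩

theorem gamma_le_card {T : List α} {Γ : Finset ℕ} (h : IsAttractor T Γ) :
    gamma T ≤ #Γ :=
  Nat.sInf_le ⟨Γ, h, rfl⟩

theorem le_gamma {T : List α} {m : ℕ} (h : ∀ Γ, IsAttractor T Γ → m ≤ #Γ) : m ≤ gamma T :=
  le_csInf ⟨_, _, isAttractor_range_length T, rfl⟩ fun _ ⟨Γ, hΓ, hm⟩ => hm ▸ h Γ hΓ

def OccursThrough (g : ℕ → α) (M j len p : ℕ) : Prop :=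
  ∃ j', j' + len ≤ M ∧ (∀ i < len, g (j' + i) = g (j + i)) ∧ j' ≤ p ∧ p < j' + len

theorem take_drop_map_range_eq_iff {g : ℕ → α} {M j j' len : ℕ} (hj : j + len ≤ M)
    (hj' : j' + len ≤ M) :
    (((List.range M).map g).drop j').take len = (((List.range M).map g).drop j).take len ↔
      ∀ i < len, g (j' + i) = g (j + i) := by
  rw [List.ext_getElem_iff]
  simp only [List.length_take, List.length_drop, List.length_map, List.length_range,
    List.getElem_take, List.getElem_drop, List.getElem_map, List.getElem_range]
  constructor
  · rintro ⟨-, h⟩ i hi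
    exact h i (by omega) (by omega)
  · exact fun h => ⟨by omega, fun i hi _ => h i (by omega)⟩

theorem isAttractor_map_range_iff {g : ℕ → α} {M : ℕ} {Γ : Finset ℕ} :
    IsAttractor ((List.range M).map g) Γ ↔
      ∀ j len, 0 < len → j + len ≤ M → ∃ p ∈ Γ, OccursThrough g M j len p := by
  simp only [IsAttractor, List.length_map, List.length_range]
  refine forall₄_congr fun j len _ hj => ⟨?_, ?_⟩
  · rintro ⟨j', hj', heq, p, hp, h1, h2⟩
    exact ⟨p, hp, j', hj', (take_drop_map_range_eq_iff hj hj').1 heq, h1, h2⟩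
  · rintro ⟨p, hp, j', hj', heq, h1, h2⟩
    exact ⟨j', hj', (take_drop_map_range_eq_iff hj hj').2 heq, p, hp, h1, h2⟩

theorem isAttractor_map_range_of_avoiding {g : ℕ → α} {M : ℕ} {Γ : Finset ℕ}
    (h : ∀ j len, 0 < len → j + len ≤ M → (∀ p ∈ Γ, p < j ∨ j + len ≤ p) →
      ∃ p ∈ Γ, OccursThrough g M j len p) :
    IsAttractor ((List.range M).map g) Γ := by
  refine isAttractor_map_range_iff.2 fun j len hlen hj => ?_
  by_cases hΓ : ∀ p ∈ Γ, p < j ∨ j + len ≤ p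
  · exact h j len hlen hj hΓ
  · obtain ⟨p, hp, hpj⟩ := not_forall₂.1 hΓ
    exact ⟨p, hp, j, hj, fun _ _ => rfl, by omega, by omega⟩

theorem IsAttractor.exists_mem_Ico_of_unique {g : ℕ → α} {M j len : ℕ} {Γ : Finset ℕ}
    (hA : IsAttractor ((List.range M).map g) Γ) (hlen : 0 < len) (hj : j + len ≤ M)
    (huniq : ∀ j', j' + len ≤ M → (∀ i < len, g (j' + i) = g (j + i)) → j' = j) :
    ∃ p ∈ Γ, j ≤ p ∧ p < j + len := by
  obtain ⟨p, hp, j', hj', heq, h1, h2⟩ := isAttractor_map_range_iff.1 hA j len hlen hj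
  obtain rfl := huniq j' hj' heq
  exact ⟨p, hp, h1, h2⟩

theorem IsAttractor.mem_of_unique {g : ℕ → α} {M i : ℕ} {Γ : Finset ℕ}
    (hA : IsAttractor ((List.range M).map g) Γ) (hi : i < M)
    (huniq : ∀ i' < M, g i' = g i → i' = i) : i ∈ Γ := by
  obtain ⟨p, hp, h1, h2⟩ := hA.exists_mem_Ico_of_unique one_pos hi
    fun j' hj' h => huniq j' hj' (by simpa using h 0 one_pos)
  rwa [show p = i by omega] at hp

end Attractor

theorem card_inter_Ico_add_card_inter_Ico (Γ : Finset ℕ) {a b c : ℕ} (hab : a ≤ b)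
    (hbc : b ≤ c) : #(Γ ∩ Ico a b) + #(Γ ∩ Ico b c) = #(Γ ∩ Ico a c) := by
  rw [← Ico_union_Ico_eq_Ico hab hbc, inter_union_distrib_left, card_union_of_disjoint
    ((Ico_disjoint_Ico_consecutive a b c).mono inter_subset_right inter_subset_right)]

theorem sum_le_card_inter_Ico {Γ : Finset ℕ} {b : ℕ → ℕ} (hb : Monotone b) {m : ℕ → ℕ} :
    ∀ n, (∀ i < n, m i ≤ #(Γ ∩ Ico (b i) (b (i + 1)))) →
      ∑ i ∈ range n, m i ≤ #(Γ ∩ Ico (b 0) (b n))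
  | 0, _ => by simp
  | n + 1, h => by
    rw [sum_range_succ, ← card_inter_Ico_add_card_inter_Ico Γ (hb n.zero_le) (hb n.le_succ)]
    exact add_le_add (sum_le_card_inter_Ico hb n fun i hi => h i (by omega))
      (h n n.lt_succ_self)

theorem map_range'_eq_replicate {g : ℕ → ℕ} {a n : ℕ}
    (h : ∀ i, a ≤ i → i < a + n → g i = 0) : (List.range' a n).map g = List.replicate n 0 := by
  rw [List.eq_replicate_iff]
  refine ⟨by simp, ?_⟩
  simp only [List.mem_map, List.mem_range'_1]
  rintro _ ⟨i, ⟨h1, h2⟩, rfl⟩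
  exact h i h1 h2

theorem range'_mul_eq_flatMap (a w : ℕ) :
    ∀ n, List.range' a (n * w) = (List.range n).flatMap fun q => List.range' (a + q * w) w
  | 0 => by simp
  | n + 1 => by
    rw [List.range_succ, List.flatMap_append, ← range'_mul_eq_flatMap a w n, add_mul, one_mul]
    simp [List.range'_append_1]

namespace AttrT

def blockStart (k q : ℕ) : ℕ := 2 * k + 2 + q * (k + 2)

def xPos (k q : ℕ) : ℕ := blockStart k q + (k - q)

/-- `letter k c` is `attrT k` as a function of the position, with its first `x` replaced by `c`.
Block `q` is the paper's `#_{q+1} a^{k-1-q} x a^{q+1}`; it starts at `blockStart k q` and has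
its `x` at `xPos k q`. -/
def letter (k c i : ℕ) : ℕ :=
  if i < 2 * k + 2 then (if i = k then c else 0)
  else if (i - (2 * k + 2)) % (k + 2) = 0 then 3 + (i - (2 * k + 2)) / (k + 2)
  else if (i - (2 * k + 2)) % (k + 2) = k - (i - (2 * k + 2)) / (k + 2) then 1
  else 0

def word (k c : ℕ) : List ℕ := (List.range (blockStart k k)).map (letter k c)

variable {k c q : ℕ}

theorem blockStart_succ (k q : ℕ) : blockStart k (q + 1) = blockStart k q + (k + 2) := by
  unfold blockStart; ring

theorem blockStart_strictMono (k : ℕ) : StrictMono (blockStart k) :=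
  strictMono_nat_of_lt_succ fun q => by rw [blockStart_succ]; omega

theorem le_blockStart (k q : ℕ) : 2 * k + 2 ≤ blockStart k q := Nat.le_add_right _ _

theorem letter_of_lt {i : ℕ} (h : i < 2 * k + 2) : letter k c i = if i = k then c else 0 := by
  rw [letter, if_pos h]

theorem letter_blockStart_add {r : ℕ} (hr : r < k + 2) :
    letter k c (blockStart k q + r) = if r = 0 then 3 + q else if r = k - q then 1 else 0 := by
  have hsub : blockStart k q + r - (2 * k + 2) = r + q * (k + 2) := by unfold blockStart; omega
  have hmod : (r + q * (k + 2)) % (k + 2) = r := by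
    rw [Nat.add_mul_mod_self_right, Nat.mod_eq_of_lt hr]
  have hdiv : (r + q * (k + 2)) / (k + 2) = q := by
    rw [Nat.add_mul_div_right _ _ (by omega), Nat.div_eq_of_lt hr, zero_add]
  rw [letter, if_neg (by have := le_blockStart k q; omega), hsub, hmod, hdiv]

theorem exists_blockStart_add {i : ℕ} (h1 : 2 * k + 2 ≤ i) (h2 : i < blockStart k k) :
    ∃ q < k, ∃ r < k + 2, i = blockStart k q + r := by
  refine ⟨(i - (2 * k + 2)) / (k + 2), ?_, (i - (2 * k + 2)) % (k + 2),
    Nat.mod_lt _ (by omega), ?_⟩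
  · exact Nat.div_lt_of_lt_mul (by rw [Nat.mul_comm (k + 2) k]; unfold blockStart at h2; omega)
  · have := Nat.div_add_mod' (i - (2 * k + 2)) (k + 2)
    unfold blockStart; omega

theorem letter_self : letter k c k = c := by rw [letter_of_lt (by omega), if_pos rfl]

theorem letter_blockStart (k c q : ℕ) : letter k c (blockStart k q) = 3 + q := by
  simpa using letter_blockStart_add (k := k) (c := c) (q := q) (r := 0) (by omega)

theorem letter_xPos (hq : q < k) : letter k c (xPos k q) = 1 := by
  rw [xPos, letter_blockStart_add (show k - q < k + 2 by omega), if_neg (by omega), if_pos rfl]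

theorem letter_of_mem_block {i : ℕ} (h1 : blockStart k q < i)
    (h2 : i < blockStart k (q + 1)) : letter k c i = if i = xPos k q then 1 else 0 := by
  obtain ⟨r, rfl⟩ := Nat.exists_eq_add_of_lt h1
  rw [blockStart_succ] at h2
  rw [add_assoc, letter_blockStart_add (show r + 1 < k + 2 by omega), if_neg (by omega), xPos]
  simp only [add_right_inj]

theorem letter_of_ne {c' i : ℕ} (h : i ≠ k) : letter k c i = letter k c' i := by
  simp [letter, h]

theorem eq_of_letter_ne_zero {i : ℕ} (hi : i < blockStart k k) (h : letter k c i ≠ 0) :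
    i = k ∨ ∃ q < k, i = blockStart k q ∨ i = xPos k q := by
  rcases Nat.lt_or_ge i (2 * k + 2) with hlt | hge
  · rw [letter_of_lt hlt] at h
    exact .inl (by_contra fun hne => h (if_neg hne))
  · obtain ⟨q, hq, r, hr, rfl⟩ := exists_blockStart_add hge hi
    rw [letter_blockStart_add hr] at h
    split_ifs at h with h0 hx
    · exact .inr ⟨q, hq, .inl (by rw [h0, add_zero])⟩
    · exact .inr ⟨q, hq, .inr (by rw [xPos, hx])⟩
    · exact absurd rfl h

theorem eq_blockStart_of_letter_eq {i : ℕ} (hc : c < 3) (hi : i < blockStart k k)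
    (h : letter k c i = 3 + q) : i = blockStart k q := by
  rcases eq_of_letter_ne_zero hi (by rw [h]; omega) with rfl | ⟨q', hq', rfl | rfl⟩
  · rw [letter_self] at h; omega
  · rw [letter_blockStart] at h; rw [show q' = q by omega]
  · rw [letter_xPos hq'] at h; omega

theorem eq_self_of_letter_eq_two {i : ℕ} (hi : i < blockStart k k) (h : letter k 2 i = 2) :
    i = k := by
  rcases eq_of_letter_ne_zero hi (by rw [h]; omega) with rfl | ⟨q', hq', rfl | rfl⟩
  · rfl
  · rw [letter_blockStart] at h; omega
  · rw [letter_xPos hq'] at h; omega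

theorem exists_xPos_of_letter_eq_one {i : ℕ} (hi : i < blockStart k k) (hc : c ≠ 1)
    (h : letter k c i = 1) : ∃ q < k, i = xPos k q := by
  rcases eq_of_letter_ne_zero hi (by rw [h]; omega) with rfl | ⟨q', hq', rfl | rfl⟩
  · rw [letter_self] at h; omega
  · rw [letter_blockStart] at h; omega
  · exact ⟨q', hq', rfl⟩

theorem eq_of_forall_letter_eq_zero {j : ℕ} (hc : c ≠ 0) (hj : j + (k + 1) ≤ blockStart k k)
    (hz : ∀ i < k + 1, letter k c (j + i) = 0) : j = k + 1 := by
  have hne : ∀ p, j ≤ p → p ≤ j + k → letter k c p ≠ 0 → False := fun p h1 h2 hp =>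
    hp (by simpa [Nat.add_sub_cancel' h1] using hz (p - j) (by omega))
  have hP := le_blockStart k 0
  by_contra hjk
  rcases Nat.lt_or_ge j (2 * k + 2) with h1 | h1
  · rcases le_or_gt j k with h2 | h2
    · exact hne k h2 (by omega) (by rwa [letter_self])
    · exact hne (blockStart k 0) (by unfold blockStart; omega) (by unfold blockStart; omega)
        (by rw [letter_blockStart]; omega)
  · obtain ⟨q, hq, r, hr, rfl⟩ := exists_blockStart_add h1 (by omega)
    rcases Nat.eq_zero_or_pos r with rfl | h0
    · exact hne _ le_rfl (by omega) (by rw [add_zero, letter_blockStart]; omega)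
    rcases le_or_gt r (k - q) with h2 | h2
    · exact hne (xPos k q) (by unfold xPos; omega) (by unfold xPos; omega)
        (by rw [letter_xPos hq]; omega)
    · exact hne (blockStart k (q + 1)) (by rw [blockStart_succ]; omega)
        (by rw [blockStart_succ]; omega) (by rw [letter_blockStart]; omega)

variable {Γ : Finset ℕ}

theorem blockStart_mem (hA : IsAttractor (word k c) Γ) (hc : c < 3) (hq : q < k) :
    blockStart k q ∈ Γ :=
  hA.mem_of_unique (blockStart_strictMono k hq) fun _ hi h =>
    eq_blockStart_of_letter_eq hc hi (h.trans (letter_blockStart k c q))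

theorem self_mem (hA : IsAttractor (word k 2) Γ) : k ∈ Γ :=
  hA.mem_of_unique (by have := le_blockStart k k; omega) fun _ hi h =>
    eq_self_of_letter_eq_two hi (h.trans letter_self)

theorem exists_mem_le (hA : IsAttractor (word k c) Γ) (hc0 : c ≠ 0) (hc3 : c < 3) :
    ∃ p ∈ Γ, p ≤ k := by
  have hN := le_blockStart k k
  have huniq : ∀ j', j' + (k + 1) ≤ blockStart k k →
      (∀ i < k + 1, letter k c (j' + i) = letter k c (0 + i)) → j' = 0 := by
    intro j' hj' h
    have hk : letter k c (j' + k) = c := by rw [h k (by omega), zero_add, letter_self]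
    rcases eq_of_letter_ne_zero (by omega) (by omega : letter k c (j' + k) ≠ 0) with
      h1 | ⟨q, hq, h1 | h1⟩
    · omega
    · rw [h1, letter_blockStart] at hk; omega
    · -- the occurrence would start `q` letters before the `#` of block `q`
      have h0 := h q (by omega)
      rw [show j' + q = blockStart k q by unfold xPos at h1; omega, letter_blockStart, zero_add,
        letter_of_lt (by omega), if_neg (by omega)] at h0
      omega
  obtain ⟨p, hp, -, h⟩ := hA.exists_mem_Ico_of_unique (by omega) (by omega) huniq
  exact ⟨p, hp, by omega⟩

theorem exists_mem_Icc (hA : IsAttractor (word k c) Γ) (hc : c ≠ 0) :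
    ∃ p ∈ Γ, k + 1 ≤ p ∧ p ≤ 2 * k + 1 := by
  have hN := le_blockStart k k
  obtain ⟨p, hp, h1, h2⟩ := hA.exists_mem_Ico_of_unique (j := k + 1) (len := k + 1) (by omega)
    (by omega) fun j' hj' h => eq_of_forall_letter_eq_zero hc hj' fun i hi => by
      rw [h i hi, letter_of_lt (by omega), if_neg (by omega)]
  exact ⟨p, hp, h1, by omega⟩

theorem exists_mem_block (hA : IsAttractor (word k c) Γ) (hc : c ≠ 1) (hq : q < k) :
    ∃ p ∈ Γ, blockStart k q < p ∧ p < blockStart k (q + 1) := by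
  have hN := (blockStart_strictMono k).monotone (show q + 1 ≤ k by omega)
  rw [blockStart_succ] at hN ⊢
  have hXq : xPos k q = blockStart k q + 1 + (k - q - 1) := by unfold xPos; omega
  have hx : letter k c (blockStart k q + 1 + (k - q - 1)) = 1 := by rw [← hXq, letter_xPos hq]
  have h0 : ∀ i < k + 1, i ≠ k - q - 1 → letter k c (blockStart k q + 1 + i) = 0 := by
    intro i hi hne
    rw [letter_of_mem_block (q := q) (by omega) (by rw [blockStart_succ]; omega), if_neg (by omega)]
  have huniq : ∀ j', j' + (k + 1) ≤ blockStart k k →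
      (∀ i < k + 1, letter k c (j' + i) = letter k c (blockStart k q + 1 + i)) →
        j' = blockStart k q + 1 := by
    intro j' hj' h
    obtain ⟨m, hm, hxm⟩ := exists_xPos_of_letter_eq_one (by omega) hc
      ((h (k - q - 1) (by omega)).trans hx)
    unfold xPos at hxm
    -- otherwise the occurrence contains the `#` of block `m + 1` (if `m < q`) or of block `m`
    rcases Nat.lt_trichotomy m q with hlt | rfl | hgt
    · have h1 := h (k + 1 + m - q) (by omega)
      rw [h0 _ (by omega) (by omega), show j' + (k + 1 + m - q) = blockStart k (m + 1) by
        rw [blockStart_succ]; omega, letter_blockStart] at h1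
      omega
    · omega
    · have h1 := h (m - q - 1) (by omega)
      rw [h0 _ (by omega) (by omega), show j' + (m - q - 1) = blockStart k m by omega,
        letter_blockStart] at h1
      omega
  obtain ⟨p, hp, h1, h2⟩ := hA.exists_mem_Ico_of_unique (by omega) (by omega) huniq
  exact ⟨p, hp, by omega, by omega⟩

theorem le_card_of_forall_block {m : ℕ} (h0 : ∃ p ∈ Γ, p ≤ k)
    (h1 : ∃ p ∈ Γ, k + 1 ≤ p ∧ p ≤ 2 * k + 1)
    (hblock : ∀ q < k, m ≤ #(Γ ∩ Ico (blockStart k q) (blockStart k (q + 1)))) :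
    2 + k * m ≤ #Γ := by
  have one_le {a b : ℕ} (h : ∃ p ∈ Γ, a ≤ p ∧ p < b) : 1 ≤ #(Γ ∩ Ico a b) := by
    obtain ⟨p, hp, hap, hpb⟩ := h
    exact card_pos.2 ⟨p, mem_inter.2 ⟨hp, mem_Ico.2 ⟨hap, hpb⟩⟩⟩
  have hhead := one_le (a := 0) (b := k + 1)
    (by obtain ⟨p, hp, h⟩ := h0; exact ⟨p, hp, by omega⟩)
  have hmid := one_le (a := k + 1) (b := blockStart k 0)
    (by obtain ⟨p, hp, h⟩ := h1; exact ⟨p, hp, h.1, by unfold blockStart; omega⟩)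
  have htail := sum_le_card_inter_Ico (blockStart_strictMono k).monotone k hblock
  rw [sum_const, card_range, smul_eq_mul] at htail
  have hP := le_blockStart k 0
  calc 2 + k * m ≤ #(Γ ∩ Ico 0 (k + 1)) + #(Γ ∩ Ico (k + 1) (blockStart k 0)) +
        #(Γ ∩ Ico (blockStart k 0) (blockStart k k)) := by omega
    _ = #(Γ ∩ Ico 0 (blockStart k k)) := by
      rw [card_inter_Ico_add_card_inter_Ico Γ (Nat.zero_le _) (by omega),
        card_inter_Ico_add_card_inter_Ico Γ (Nat.zero_le _)
          ((blockStart_strictMono k).monotone (Nat.zero_le k))]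
    _ ≤ #Γ := card_le_card inter_subset_left

theorem blockStart_mem_Ico (k q : ℕ) :
    blockStart k q ∈ Ico (blockStart k q) (blockStart k (q + 1)) :=
  mem_Ico.2 ⟨le_rfl, blockStart_strictMono k q.lt_succ_self⟩

theorem le_card_of_isAttractor_word_one (hA : IsAttractor (word k 1) Γ) : k + 2 ≤ #Γ := by
  have := le_card_of_forall_block (m := 1) (exists_mem_le hA one_ne_zero (by norm_num))
    (exists_mem_Icc hA one_ne_zero) fun q hq =>
      card_pos.2 ⟨_, mem_inter.2 ⟨blockStart_mem hA (by norm_num) hq, blockStart_mem_Ico k q⟩⟩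
  omega

theorem le_card_of_isAttractor_word_two (hA : IsAttractor (word k 2) Γ) : 2 * k + 2 ≤ #Γ := by
  have := le_card_of_forall_block (m := 2) ⟨k, self_mem hA, le_rfl⟩
    (exists_mem_Icc hA two_ne_zero) fun q hq => by
      obtain ⟨p, hp, h1, h2⟩ := exists_mem_block hA (by norm_num) hq
      exact one_lt_card.2 ⟨_, mem_inter.2 ⟨blockStart_mem hA (by norm_num) hq,
        blockStart_mem_Ico k q⟩, p, mem_inter.2 ⟨hp, mem_Ico.2 ⟨h1.le, h2⟩⟩, h1.ne⟩
  omega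

def attractorOne (k : ℕ) : Finset ℕ :=
  insert k (insert (2 * k + 1) ((range k).image (blockStart k)))

def attractorTwo (k : ℕ) : Finset ℕ := attractorOne k ∪ (range k).image (xPos k)

theorem mem_attractorOne {p : ℕ} :
    p ∈ attractorOne k ↔ p = k ∨ p = 2 * k + 1 ∨ ∃ q < k, blockStart k q = p := by
  simp [attractorOne]

theorem mem_attractorTwo {p : ℕ} :
    p ∈ attractorTwo k ↔ p ∈ attractorOne k ∨ ∃ q < k, xPos k q = p := by
  simp [attractorTwo]

theorem card_attractorOne_le (k : ℕ) : #(attractorOne k) ≤ k + 2 := by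
  have h1 := card_insert_le k (insert (2 * k + 1) ((range k).image (blockStart k)))
  have h2 := card_insert_le (2 * k + 1) ((range k).image (blockStart k))
  have h3 : #((range k).image (blockStart k)) ≤ k := card_image_le.trans (card_range k).le
  unfold attractorOne; omega

theorem card_attractorTwo_le (k : ℕ) : #(attractorTwo k) ≤ 2 * k + 2 := by
  have h1 := card_union_le (attractorOne k) ((range k).image (xPos k))
  have h2 : #((range k).image (xPos k)) ≤ k := card_image_le.trans (card_range k).le
  have h3 := card_attractorOne_le k
  unfold attractorTwo; omega

theorem occursThrough_of_forall_letter_eq_zero {j len : ℕ} (hc : c ≠ 0) (hlen : 0 < len)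
    (hj : j + len ≤ blockStart k k) (havoid : 2 * k + 1 < j ∨ j + len ≤ 2 * k + 1)
    (hz : ∀ i < len, letter k c (j + i) = 0) :
    OccursThrough (letter k c) (blockStart k k) j len (2 * k + 1) := by
  have hshort : len ≤ k := by
    by_contra hlong
    have := eq_of_forall_letter_eq_zero hc (by omega) fun i hi => hz i (by omega)
    omega
  refine ⟨2 * k + 2 - len, by have := le_blockStart k k; omega, fun i hi => ?_, by omega,
    by omega⟩
  rw [hz i hi, letter_of_lt (by omega), if_neg (by omega)]

theorem occursThrough_of_mem_block {j len : ℕ} (h1 : blockStart k q < j)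
    (h2 : j + len ≤ blockStart k (q + 1)) (h3 : j ≤ xPos k q) (h4 : xPos k q < j + len) :
    OccursThrough (letter k 1) (blockStart k k) j len k := by
  have hX : xPos k q = blockStart k q + (k - q) := rfl
  rw [blockStart_succ] at h2
  refine ⟨k - (xPos k q - j), by have := le_blockStart k k; omega, fun i hi => ?_, by omega,
    by omega⟩
  rw [letter_of_mem_block (i := j + i) (q := q) (by omega) (by rw [blockStart_succ]; omega),
    letter_of_lt (i := k - (xPos k q - j) + i) (by omega)]
  exact if_congr (by omega) rfl rfl

theorem isAttractor_word_one : IsAttractor (word k 1) (attractorOne k) := by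
  refine isAttractor_map_range_of_avoiding fun j len hlen hj havoid => ?_
  have h2k := havoid (2 * k + 1) (mem_attractorOne.2 (.inr (.inl rfl)))
  have hP : ∀ q < k, blockStart k q < j ∨ j + len ≤ blockStart k q := fun q hq =>
    havoid _ (mem_attractorOne.2 (.inr (.inr ⟨q, hq, rfl⟩)))
  by_cases hx : ∃ q < k, j ≤ xPos k q ∧ xPos k q < j + len
  · obtain ⟨q, hq, h1, h2⟩ := hx
    have hX : xPos k q = blockStart k q + (k - q) := rfl
    refine ⟨k, mem_attractorOne.2 (.inl rfl), occursThrough_of_mem_block ?_ ?_ h1 h2⟩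
    · rcases hP q hq with h | h <;> omega
    · rcases Nat.lt_or_ge (q + 1) k with hq1 | hq1
      · have := blockStart_succ k q
        rcases hP (q + 1) hq1 with h | h <;> omega
      · have := (blockStart_strictMono k).monotone hq1
        omega
  · push Not at hx
    refine ⟨2 * k + 1, mem_attractorOne.2 (.inr (.inl rfl)),
      occursThrough_of_forall_letter_eq_zero one_ne_zero hlen hj (by omega) fun i hi => ?_⟩
    by_contra hne
    rcases eq_of_letter_ne_zero (by omega) hne with h | ⟨q, hq, h | h⟩
    · have := havoid k (mem_attractorOne.2 (.inl rfl)); omega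
    · have := hP q hq; omega
    · have := hx q hq; omega

theorem isAttractor_word_two (hc : c ≠ 0) : IsAttractor (word k c) (attractorTwo k) := by
  refine isAttractor_map_range_of_avoiding fun j len hlen hj havoid => ?_
  have hone : ∀ p ∈ attractorOne k, p < j ∨ j + len ≤ p :=
    fun p hp => havoid p (mem_attractorTwo.2 (.inl hp))
  have h2k : 2 * k + 1 ∈ attractorOne k := mem_attractorOne.2 (.inr (.inl rfl))
  refine ⟨2 * k + 1, mem_attractorTwo.2 (.inl h2k), occursThrough_of_forall_letter_eq_zero hc
    hlen hj (hone _ h2k) fun i hi => ?_⟩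
  by_contra hne
  rcases eq_of_letter_ne_zero (by omega) hne with h | ⟨q, hq, h | h⟩
  · have := hone k (mem_attractorOne.2 (.inl rfl)); omega
  · have := hone _ (mem_attractorOne.2 (.inr (.inr ⟨q, hq, rfl⟩))); omega
  · have := havoid _ (mem_attractorTwo.2 (.inr ⟨q, hq, rfl⟩)); omega

theorem gamma_word_one : gamma (word k 1) = k + 2 :=
  le_antisymm ((gamma_le_card isAttractor_word_one).trans (card_attractorOne_le k))
    (le_gamma fun _ => le_card_of_isAttractor_word_one)

theorem gamma_word_two : gamma (word k 2) = 2 * k + 2 :=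
  le_antisymm ((gamma_le_card (isAttractor_word_two two_ne_zero)).trans (card_attractorTwo_le k))
    (le_gamma fun _ => le_card_of_isAttractor_word_two)

theorem word_set (k c c' : ℕ) : (word k c).set k c' = word k c' := by
  refine List.ext_getElem (by simp [word]) fun i _ _ => ?_
  simp only [word, List.getElem_set, List.getElem_map, List.getElem_range]
  split_ifs with h
  · rw [← h, letter_self]
  · exact letter_of_ne (Ne.symm h)

theorem map_range_letter_two_mul_add_two (k c : ℕ) :
    (List.range (2 * k + 2)).map (letter k c) =
      List.replicate k 0 ++ [c] ++ List.replicate (k + 1) 0 := by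
  rw [List.range_eq_range', show 2 * k + 2 = k + 1 + (k + 1) by omega, ← List.range'_append_1,
    ← List.range'_append_1 (m := k)]
  simp only [List.map_append, List.range'_one, List.map_cons, List.map_nil, zero_add, letter_self]
  rw [map_range'_eq_replicate, map_range'_eq_replicate] <;> intro i _ hi <;>
    rw [letter_of_lt (by omega), if_neg (by omega)]

theorem map_range'_blockStart (hq : q < k) :
    (List.range' (blockStart k q) (k + 2)).map (letter k c) =
      [3 + q] ++ List.replicate (k - 1 - q) 0 ++ [1] ++ List.replicate (q + 1) 0 := by
  have hX : xPos k q = blockStart k q + (1 + (k - 1 - q)) := by unfold xPos; omega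
  have hzero : ∀ i, blockStart k q < i → i < blockStart k (q + 1) → i ≠ xPos k q →
      letter k c i = 0 := fun i h1 h2 hne => by rw [letter_of_mem_block h1 h2, if_neg hne]
  rw [show k + 2 = 1 + (k - 1 - q) + 1 + (q + 1) by omega, ← List.range'_append_1,
    ← List.range'_append_1, ← List.range'_append_1]
  simp only [List.map_append, List.range'_one, List.map_cons, List.map_nil, letter_blockStart]
  rw [← hX, letter_xPos hq, map_range'_eq_replicate, map_range'_eq_replicate] <;> intro i h1 h2 <;>
    exact hzero i (by omega) (by rw [blockStart_succ]; omega) (by omega)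

theorem attrT_eq_word (k : ℕ) : attrT k = word k 1 := by
  rw [word, List.range_eq_range', show blockStart k k = 2 * k + 2 + k * (k + 2) from rfl,
    ← List.range'_append_1, List.map_append, zero_add, ← List.range_eq_range',
    map_range_letter_two_mul_add_two, range'_mul_eq_flatMap, List.map_flatMap, attrT]
  exact congrArg _ (List.flatMap_congr fun q hq => map_range'_blockStart (List.mem_range.1 hq)).symm

end AttrT

theorem gamma_substitution_lower_bound_general (k : ℕ) :
    gamma (attrT k) = k + 2 ∧ gamma ((attrT k).set k 2) = 2 * k + 2 := by
  rw [AttrT.attrT_eq_word, AttrT.word_set]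
  exact ⟨AttrT.gamma_word_one, AttrT.gamma_word_two⟩

/-- For the string `T = attrT k` (k ≥ 1) we have `γ(T) = k + 2`, whereas substituting
the first occurrence of `x` (at position `k`, 0-indexed) by the fresh character `b = 2`
yields a string `T'` with `γ(T') = 2k + 2`; so a single substitution can (asymptotically)
double the smallest string attractor size. -/
theorem gamma_substitution_lower_bound (k : ℕ) (hk : 1 ≤ k) :
    gamma (attrT k) = k + 2 ∧ gamma ((attrT k).set k 2) = 2 * k + 2 :=
  gamma_substitution_lower_bound_general k
end
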